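/- (Free-variable sum equation) For every evaluation context E and multisets of variables M and M', if no variable occurring in M' is captured (bound) by E, then FV_{M+M'}(E) = FV_M(E) + M'. -/

import Mathlib

/-!  A term calculus with sub-machine semantics (Muroya & Ghica,
"The Dynamic Geometry of Interaction Machine").

Terms: `t ::= x | λx.t | t @n u | t @l u | t @r u | t[x←u]`,
possibly containing occurrences of a "window" `⌈·⌉`.
An *enriched* term contains exactly one window. -/

/-- Labels of basic rules / reductions: β, σ and ε. -/
inductive RLabel : Type
  | beta | sigma | eps
deriving DecidableEq

/-- Terms-with-window of the calculus: variables, abstraction, the three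
application constructors (call-by-need `@n`, left-to-right call-by-value `@l`,
right-to-left call-by-value `@r`), explicit substitutions `t[x←u]`,
and the window `⌈t⌉`. -/
inductive TermW : Type
  | var : String → TermW
  | lam : String → TermW → TermW
  | appN : TermW → TermW → TermW
  | appL : TermW → TermW → TermW
  | appR : TermW → TermW → TermW
  | esub : TermW → String → TermW → TermW
  | win : TermW → TermW
deriving DecidableEq

namespace TermW

/-- The number of occurrences of the window `⌈·⌉`. -/
def windows : TermW → ℕ
  | var _ => 0
  | lam _ t => windows t
  | appN t u | appL t u | appR t u => windows t + windows u
  | esub t _ u => windows t + windows u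
  | win t => windows t + 1

/-- The number of explicit substitutions. -/
def esubs : TermW → ℕ
  | var _ => 0
  | lam _ t => esubs t
  | appN t u | appL t u | appR t u => esubs t + esubs u
  | esub t _ u => esubs t + esubs u + 1
  | win t => esubs t

/-- The size `|t|` of a term (windows are transparent). -/
def size : TermW → ℕ
  | var _ => 1
  | lam _ t => size t + 1
  | appN t u | appL t u | appR t u => size t + size u + 1
  | esub t _ u => size t + size u + 1
  | win t => size t

/-- The multiset of free variables of a term. -/
def fv : TermW → Multiset String
  | var x => {x}
  | lam x t => (fv t).filter (· ≠ x)
  | appN t u | appL t u | appR t u => fv t + fv u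
  | esub t x u => (fv t).filter (· ≠ x) + fv u
  | win t => fv t

/-- Number of call-by-need applications `@n`. -/
def countN : TermW → ℕ
  | var _ => 0
  | lam _ t => countN t
  | appN t u => countN t + countN u + 1
  | appL t u | appR t u => countN t + countN u
  | esub t _ u => countN t + countN u
  | win t => countN t

/-- Number of left-to-right call-by-value applications `@l`. -/
def countL : TermW → ℕ
  | var _ => 0
  | lam _ t => countL t
  | appL t u => countL t + countL u + 1
  | appN t u | appR t u => countL t + countL u
  | esub t _ u => countL t + countL u
  | win t => countL t

/-- Number of right-to-left call-by-value applications `@r`. -/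
def countR : TermW → ℕ
  | var _ => 0
  | lam _ t => countR t
  | appR t u => countR t + countR u + 1
  | appN t u | appL t u => countR t + countR u
  | esub t _ u => countR t + countR u
  | win t => countR t

/-- A term is *pure* if it is an ordinary term (no window) with no explicit
substitutions. -/
def Pure (t : TermW) : Prop := esubs t = 0 ∧ windows t = 0

/-- A term is *closed* if it has no free variables. -/
def Closed (t : TermW) : Prop := fv t = 0

/-- A term contains function applications of a single strategy. -/
def Uniform (t : TermW) : Prop :=
  (countL t = 0 ∧ countR t = 0) ∨ (countN t = 0 ∧ countR t = 0) ∨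
    (countN t = 0 ∧ countL t = 0)

end TermW

/-- Answer contexts `A ::= ⟨·⟩ | A[x←t]`. -/
inductive ACtx : Type
  | hole : ACtx
  | sub : ACtx → String → TermW → ACtx

/-- Plugging a term into an answer context. -/
def ACtx.plug : ACtx → TermW → TermW
  | .hole, t => t
  | .sub A x u, t => .esub (A.plug t) x u

/-- Evaluation contexts
`E ::= ⟨·⟩ | E[x←t] | E'⟨x⟩[x←E] | E @n t | E @l t | A⟨v⟩ @l E | t @r E | E @r A⟨v⟩`
(values `v = λy.b` are given by their components). -/
inductive ECtx : Type
  | hole : ECtx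
  | sub : ECtx → String → TermW → ECtx
  | look : ECtx → String → ECtx → ECtx
  | apN : ECtx → TermW → ECtx
  | apLfun : ECtx → TermW → ECtx
  | apLarg : ACtx → String → TermW → ECtx → ECtx
  | apRarg : TermW → ECtx → ECtx
  | apRfun : ECtx → ACtx → String → TermW → ECtx

/-- Plugging a term into an evaluation context. -/
def ECtx.plug : ECtx → TermW → TermW
  | .hole, s => s
  | .sub E x t, s => .esub (E.plug s) x t
  | .look E' x E, s => .esub (E'.plug (.var x)) x (E.plug s)
  | .apN E t, s => .appN (E.plug s) t
  | .apLfun E t, s => .appL (E.plug s) t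
  | .apLarg A y b E, s => .appL (A.plug (.lam y b)) (E.plug s)
  | .apRarg t E, s => .appR t (E.plug s)
  | .apRfun E A y b, s => .appR (E.plug s) (A.plug (.lam y b))

/-- Plugging an evaluation context into (the hole of) an evaluation context. -/
def ECtx.comp : ECtx → ECtx → ECtx
  | .hole, F => F
  | .sub E x t, F => .sub (E.comp F) x t
  | .look E' x E, F => .look E' x (E.comp F)
  | .apN E t, F => .apN (E.comp F) t
  | .apLfun E t, F => .apLfun (E.comp F) t
  | .apLarg A y b E, F => .apLarg A y b (E.comp F)
  | .apRarg t E, F => .apRarg t (E.comp F)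
  | .apRfun E A y b, F => .apRfun (E.comp F) A y b

/-- The map `FV_M` of evaluation contexts to multisets of free variables,
relative to a multiset `M` of variables for the hole. -/
def ECtx.fvc : ECtx → Multiset String → Multiset String
  | .hole, M => M
  | .sub E x t, M => ((E.fvc M).filter (· ≠ x)) + t.fv
  | .look E' x E, M => ((E'.plug (.var x)).fv.filter (· ≠ x)) + E.fvc M
  | .apN E t, M => E.fvc M + t.fv
  | .apLfun E t, M => E.fvc M + t.fv
  | .apLarg A y b E, M => (A.plug (.lam y b)).fv + E.fvc M
  | .apRarg t E, M => t.fv + E.fvc M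
  | .apRfun E A y b, M => E.fvc M + (A.plug (.lam y b)).fv

/-- `E.Captures y` holds iff the hole of `E` occurs under a binder of `y`,
i.e. inside the left sub-context of some `[y←·]` construct. -/
def ECtx.Captures : ECtx → String → Prop
  | .hole, _ => False
  | .sub E x _, y => y = x ∨ E.Captures y
  | .look _ _ E, y => E.Captures y
  | .apN E _, y => E.Captures y
  | .apLfun E _, y => E.Captures y
  | .apLarg _ _ _ E, y => E.Captures y
  | .apRarg _ E, y => E.Captures y
  | .apRfun E _ _ _, y => E.Captures y

/-- Embedding of answer contexts into evaluation contexts. -/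
def ACtx.toE : ACtx → ECtx
  | .hole => .hole
  | .sub A x t => .sub A.toE x t

/-- The ten basic rules `↦β, ↦σ, ↦ε` of the sub-machine semantics. -/
inductive BStep : RLabel → TermW → TermW → Prop
  | r1 (t u : TermW) :
      BStep .eps (.win (.appN t u)) (.appN (.win t) u)
  | r2 (A : ACtx) (x : String) (t u : TermW) :
      BStep .beta (.appN (A.plug (.win (.lam x t))) u) (A.plug (.esub (.win t) x u))
  | r3 (t u : TermW) :
      BStep .eps (.win (.appL t u)) (.appL (.win t) u)
  | r4 (A : ACtx) (x : String) (t u : TermW) :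
      BStep .eps (.appL (A.plug (.win (.lam x t))) u) (.appL (A.plug (.lam x t)) (.win u))
  | r5 (A : ACtx) (x : String) (t : TermW) (A' : ACtx) (y : String) (v : TermW) :
      BStep .beta (.appL (A.plug (.lam x t)) (A'.plug (.win (.lam y v))))
        (A.plug (.esub (.win t) x (A'.plug (.lam y v))))
  | r6 (t u : TermW) :
      BStep .eps (.win (.appR t u)) (.appR t (.win u))
  | r7 (t : TermW) (A : ACtx) (y : String) (v : TermW) :
      BStep .eps (.appR t (A.plug (.win (.lam y v)))) (.appR (.win t) (A.plug (.lam y v)))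
  | r8 (A : ACtx) (x : String) (t : TermW) (A' : ACtx) (y : String) (v : TermW) :
      BStep .beta (.appR (A.plug (.win (.lam x t))) (A'.plug (.lam y v)))
        (A.plug (.esub (.win t) x (A'.plug (.lam y v))))
  | r9 (E : ECtx) (x : String) (A : ACtx) (u : TermW) :
      BStep .eps (.esub (E.plug (.win (.var x))) x (A.plug u))
        (.esub (E.plug (.var x)) x (A.plug (.win u)))
  | r10 (E : ECtx) (x : String) (A : ACtx) (y : String) (v : TermW) :
      BStep .sigma (.esub (E.plug (.var x)) x (A.plug (.win (.lam y v))))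
        (A.plug (.esub (E.plug (.win (.lam y v))) x (.lam y v)))

/-- De Bruijn skeletons, used to define alpha-equivalence. -/
inductive DBT : Type
  | fvar : String → DBT
  | bvar : ℕ → DBT
  | lam : DBT → DBT
  | appN : DBT → DBT → DBT
  | appL : DBT → DBT → DBT
  | appR : DBT → DBT → DBT
  | esub : DBT → DBT → DBT
  | win : DBT → DBT
deriving DecidableEq

/-- Conversion to de Bruijn representation relative to a list of binders. -/
def TermW.toDB : TermW → List String → DBT
  | .var x, Γ =>
      match Γ.idxOf? x with
      | some n => .bvar n
      | none => .fvar x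
  | .lam x t, Γ => .lam (t.toDB (x :: Γ))
  | .appN t u, Γ => .appN (t.toDB Γ) (u.toDB Γ)
  | .appL t u, Γ => .appL (t.toDB Γ) (u.toDB Γ)
  | .appR t u, Γ => .appR (t.toDB Γ) (u.toDB Γ)
  | .esub t x u, Γ => .esub (t.toDB (x :: Γ)) (u.toDB Γ)
  | .win t, Γ => .win (t.toDB Γ)

/-- Alpha-equivalence of terms-with-window. -/
def Alpha (t u : TermW) : Prop := t.toDB [] = u.toDB []

/-- Closure of the basic rules under evaluation contexts. -/
def CtxStep (χ : RLabel) (a b : TermW) : Prop :=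
  ∃ (E : ECtx) (t u : TermW), BStep χ t u ∧ a = E.plug t ∧ b = E.plug u

/-- Labelled reduction `⊸χ`: the closure of the basic rules under evaluation
contexts, modulo alpha-equivalence (to avoid variable capture). -/
def Red (χ : RLabel) (a b : TermW) : Prop :=
  ∃ a' b', Alpha a a' ∧ CtxStep χ a' b' ∧ Alpha b' b

/-- Evaluations: labelled reduction sequences of the sub-machine semantics. -/
inductive Evals : TermW → List RLabel → TermW → Prop
  | nil (t : TermW) : Evals t [] t
  | cons {χ : RLabel} {a b c : TermW} {ls : List RLabel} :
      Red χ a b → Evals b ls c → Evals a (χ :: ls) c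

/-- **Free-variable sum equation.**  For every evaluation context `E` and
multisets of variables `M`, `M'`, if no variable occurring in `M'` is
captured by `E`, then `FV_{M+M'}(E) = FV_M(E) + M'`. -/
theorem fv_sum_equation (E : ECtx) (M M' : Multiset String)
    (h : ∀ x ∈ M', ¬ E.Captures x) :
    E.fvc (M + M') = E.fvc M + M' := by
  induction E generalizing M with
  | hole => rfl
  | sub E x t ih =>
      have hE : ∀ y ∈ M', ¬ E.Captures y := fun y hy hc => h y hy (Or.inr hc)
      have hne : ∀ y ∈ M', y ≠ x := fun y hy he => h y hy (Or.inl he)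
      simp only [ECtx.fvc, ih M hE, Multiset.filter_add,
        Multiset.filter_eq_self.mpr hne]
      abel
  | look E' x E ih1 ih2 =>
      have hE : ∀ y ∈ M', ¬ E.Captures y := fun y hy hc => h y hy hc
      simp only [ECtx.fvc, ih2 M hE]; abel
  | apN E t ih =>
      simp only [ECtx.fvc, ih M h]; abel
  | apLfun E t ih =>
      simp only [ECtx.fvc, ih M h]; abel
  | apLarg A y b E ih =>
      simp only [ECtx.fvc, ih M h]; abel
  | apRarg t E ih =>
      simp only [ECtx.fvc, ih M h]; abel
  | apRfun E A y b ih =>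
      simp only [ECtx.fvc, ih M h]; abel
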